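/- arXiv:1608.02177 — 2 statements merged into one kernel-verified Lean document; each statement's English description precedes it below -/
import Mathlib

section
/- If d ≥ 2 is even, then P_{d,c} = {2} ∪ {p : p prime and p ∣ c}. -/
/-- `W d c n = φ^n(0)` where `φ(x) = x^d + c`. -/
def W (d : ℕ) (c : ℤ) (n : ℕ) : ℤ := (fun x : ℤ => x ^ d + c)^[n] 0

/-- `D_{d,c} = {n : n ≥ 1 and n ∣ W_n}`. -/
def Dset (d : ℕ) (c : ℤ) : Set ℕ := {n | 1 ≤ n ∧ (n : ℤ) ∣ W d c n}

/-- `P_{d,c}` is the set of primes in `D_{d,c}`. -/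
def Pset (d : ℕ) (c : ℤ) : Set ℕ := {p ∈ Dset d c | p.Prime}

lemma W_succ (d : ℕ) (c : ℤ) (n : ℕ) : W d c (n + 1) = (W d c n) ^ d + c := by
  simp [W, Function.iterate_succ_apply']

lemma cast_W (d : ℕ) (c : ℤ) (p n : ℕ) :
    ((W d c n : ℤ) : ZMod p) = (fun x : ZMod p => x ^ d + (c : ZMod p))^[n] 0 := by
  induction n with
  | zero => simp [W]
  | succ n ih =>
    rw [W_succ, Function.iterate_succ_apply']
    push_cast
    rw [ih]

theorem P_eq_of_even_degree (d : ℕ) (hd : 2 ≤ d) (hdeven : Even d) (c : ℤ) :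
    Pset d c = {2} ∪ {p : ℕ | p.Prime ∧ (p : ℤ) ∣ c} := by
  have hd1 : d ≠ 0 := by omega
  ext p
  simp only [Pset, Dset, Set.mem_union, Set.mem_singleton_iff, Set.mem_setOf_eq,
    Set.mem_sep_iff]
  constructor
  · rintro ⟨⟨hp1, hpW⟩, hp⟩
    by_cases hp2 : p = 2
    · exact Or.inl hp2
    right
    refine ⟨hp, ?_⟩
    by_contra hpc
    -- work in ZMod p
    haveI : Fact p.Prime := ⟨hp⟩
    set g : ZMod p → ZMod p := fun x => x ^ d + (c : ZMod p) with hg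
    have hWp : ((W d c p : ℤ) : ZMod p) = 0 := by
      rw [ZMod.intCast_zmod_eq_zero_iff_dvd]; exact hpW
    have hgp : g^[p] 0 = 0 := by rw [← cast_W]; exact hWp
    have hper : Function.IsPeriodicPt g p 0 := hgp
    have hc0 : (c : ZMod p) ≠ 0 := by
      rw [Ne, ZMod.intCast_zmod_eq_zero_iff_dvd]; exact hpc
    have hg0 : g 0 = (c : ZMod p) := by simp [hg, zero_pow hd1]
    have hm : Function.minimalPeriod g 0 = p := by
      rcases (hp.eq_one_or_self_of_dvd _ hper.minimalPeriod_dvd) with h1 | h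
      · exfalso
        have := Function.isPeriodicPt_minimalPeriod g 0
        rw [h1] at this
        have : g 0 = 0 := this
        rw [hg0] at this; exact hc0 this
      · exact h
    -- the orbit map is injective on Fin p, hence surjective onto ZMod p
    have hinj : Function.Injective (fun i : Fin p => g^[(i : ℕ)] 0) := by
      intro i j hij
      have := Function.iterate_injOn_Iio_minimalPeriod (f := g) (x := 0)
        (by rw [hm]; exact Set.mem_Iio.2 i.2) (by rw [hm]; exact Set.mem_Iio.2 j.2) hij
      exact Fin.ext this
    have hsurj : Function.Surjective (fun i : Fin p => g^[(i : ℕ)] 0) := by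
      have hcard : Fintype.card (Fin p) = Fintype.card (ZMod p) := by
        simp [ZMod.card]
      exact (Fintype.bijective_iff_injective_and_card _).2 ⟨hinj, hcard⟩ |>.2
    -- g has a left inverse, hence is injective
    have hfix : ∀ a : ZMod p, g^[p] a = a := by
      intro a
      obtain ⟨i, rfl⟩ := hsurj a
      rw [← Function.iterate_add_apply, add_comm, Function.iterate_add_apply, hgp]
    have hkey : ∀ a : ZMod p, g^[p - 1] (g a) = a := by
      intro a
      have h1 : p - 1 + 1 = p := by omega
      calc g^[p - 1] (g a) = g^[p - 1 + 1] a := (Function.iterate_succ_apply g (p - 1) a).symm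
        _ = g^[p] a := by rw [h1]
        _ = a := hfix a
    have hginj : Function.Injective g := by
      intro a b hab
      rw [← hkey a, ← hkey b, hab]
    -- but g 1 = g (-1) and 1 ≠ -1 since p is odd
    have h11 : g 1 = g (-1) := by
      simp [hg, hdeven.neg_one_pow]
    have := hginj h11
    have h2 : ((2 : ℕ) : ZMod p) = 0 := by push_cast; linear_combination this
    rw [ZMod.natCast_eq_zero_iff] at h2
    exact hp2 ((Nat.prime_dvd_prime_iff_eq hp Nat.prime_two).1 h2)
  · rintro (rfl | ⟨hp, hpc⟩)
    · refine ⟨⟨by norm_num, ?_⟩, Nat.prime_two⟩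
      -- 2 ∣ W 2 : work mod 2
      have : ((W d c 2 : ℤ) : ZMod 2) = 0 := by
        rw [cast_W]
        simp only [Function.iterate_succ, Function.iterate_zero, Function.comp_apply, id_eq]
        rw [zero_pow hd1, zero_add]
        have hx : ∀ x : ZMod 2, x = 0 ∨ x = 1 := by decide
        rcases hx (c : ZMod 2) with h | h <;> rw [h] <;> simp [zero_pow hd1] <;> decide
      rwa [ZMod.intCast_zmod_eq_zero_iff_dvd] at this
    · refine ⟨⟨hp.one_lt.le.trans' (by norm_num), ?_⟩, hp⟩
      have : ∀ n, (p : ℤ) ∣ W d c n := by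
        intro n
        induction n with
        | zero => simp [W]
        | succ n ih => rw [W_succ]; exact dvd_add (dvd_pow ih hd1) hpc
      exact this p
end

section
/- The set D_{d,c} is finite if and only if either (d is even and c = 1) or (d = 2 and c = −2). Moreover, in these cases D_{d,c} = {1, 2}. -/
lemma W_zero (d : ℕ) (c : ℤ) : W d c 0 = 0 := rfl

lemma W_one (d : ℕ) (c : ℤ) (hd : 2 ≤ d) : W d c 1 = c := by
  rw [W_succ, W_zero, zero_pow (by omega), zero_add]

lemma iter_sub_dvd (d : ℕ) (c : ℤ) (k : ℕ) (x y : ℤ) :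
    (x - y) ∣ ((fun x : ℤ => x ^ d + c)^[k] x - (fun x : ℤ => x ^ d + c)^[k] y) := by
  induction k with
  | zero => simp
  | succ k ih =>
      rw [Function.iterate_succ_apply', Function.iterate_succ_apply']
      simp only [add_sub_add_right_eq_sub]
      exact ih.trans (sub_dvd_pow_sub_pow _ _ d)

lemma W_sub_dvd (d : ℕ) (c : ℤ) (a k : ℕ) : W d c k ∣ W d c (a + k) - W d c a := by
  have h := iter_sub_dvd d c a (W d c k) 0
  simpa [W, ← Function.iterate_add_apply] using h

lemma W_dvd_W_mul (d : ℕ) (c : ℤ) (n k : ℕ) : W d c n ∣ W d c (k * n) := by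
  induction k with
  | zero => simp [W_zero]
  | succ k ih =>
      have h := W_sub_dvd d c (k * n) n
      have h2 : W d c n ∣ W d c (k * n + n) := by
        have h3 := dvd_add h ih
        simpa [sub_add_cancel] using h3
      simpa [Nat.succ_mul] using h2



lemma entry_point (d : ℕ) (c : ℤ) (p : ℕ) [hp : Fact p.Prime] (n : ℕ) (hn : 1 ≤ n)
    (h : ((W d c n : ℤ) : ZMod p) = 0) :
    ∃ t, 1 ≤ t ∧ t ∣ n ∧ t ≤ p ∧ ((W d c t : ℤ) : ZMod p) = 0 ∧
      (∀ k, 1 ≤ k → k < t → ((W d c k : ℤ) : ZMod p) ≠ 0) ∧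
      (p ≠ 2 → Even d → t ≠ p) := by
  set g : ℕ → ZMod p := fun k => ((W d c k : ℤ) : ZMod p) with hg
  have hg0 : g 0 = 0 := by simp [hg, W_zero]
  have hgs : ∀ k, g (k + 1) = g k ^ d + (c : ZMod p) := by
    intro k; simp only [hg, W_succ]; push_cast; ring
  have hcong : ∀ i j, g i = g j → ∀ k, g (i + k) = g (j + k) := by
    intro i j hij k
    induction k with
    | zero => simpa using hij
    | succ k ih =>
        have : g (i + k + 1) = g (j + k + 1) := by rw [hgs, hgs, ih]
        simpa [← add_assoc] using this
  have hP : ∃ k, 1 ≤ k ∧ g k = 0 := ⟨n, hn, h⟩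
  set t := Nat.find hP with ht
  obtain ⟨ht1, htz⟩ := Nat.find_spec hP
  have hmin : ∀ m, 1 ≤ m → g m = 0 → t ≤ m := fun m h1 h2 => Nat.find_min' hP ⟨h1, h2⟩
  -- divisibility
  have hmul : ∀ q, g (t * q) = 0 := by
    intro q
    induction q with
    | zero => simpa using hg0
    | succ q ih =>
        have h1 : g (t * q + t) = g (0 + t) := hcong _ _ (ih.trans hg0.symm) t
        have : g (0 + t) = 0 := by simpa using htz
        rw [mul_add, mul_one]
        rw [h1, this]
  have hdvd_of : ∀ k, g k = 0 → t ∣ k := by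
    intro k hk
    have hk0 : k = t * (k / t) + k % t := (Nat.div_add_mod k t).symm
    have hr : g (k % t) = 0 := by
      have h1 : g (t * (k / t) + k % t) = g (0 + k % t) :=
        hcong _ _ ((hmul (k / t)).trans hg0.symm) (k % t)
      rw [← hk0] at h1
      simpa [hk] using h1.symm
    rcases Nat.eq_zero_or_pos (k % t) with h0 | h0
    · exact Nat.dvd_of_mod_eq_zero h0
    · have := hmin _ h0 hr
      have hlt : k % t < t := Nat.mod_lt _ (by omega)
      omega
  -- key: if g(a) = g(b) with a < b ≤ some m where g m = 0, contradiction style helper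
  have hclash : ∀ a b : ℕ, a < b → b ≤ t → (1 ≤ a ∨ b < t) → g a = g b → a + (t - b) ≥ 1 ∧ g (a + (t - b)) = 0 := by
    intro a b hab hbt hex hgab
    constructor
    · omega
    · have h1 : g (a + (t - b)) = g (b + (t - b)) := hcong _ _ hgab _
      have h2 : b + (t - b) = t := by omega
      rw [h1, h2, htz]
  have hinj : ∀ i j : ℕ, i < t → j < t → g i = g j → i = j := by
    intro i j hi hj hij
    by_contra hne
    rcases Nat.lt_or_ge i j with hlt | hge
    · obtain ⟨h1, h2⟩ := hclash i j hlt (le_of_lt hj) (Or.inr hj) hij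
      have := hmin _ h1 h2
      omega
    · have hlt : j < i := by omega
      obtain ⟨h1, h2⟩ := hclash j i hlt (le_of_lt hi) (Or.inr hi) hij.symm
      have := hmin _ h1 h2
      omega
  have htle : t ≤ p := by
    have hinj2 : Function.Injective (fun i : Fin t => g i) := by
      intro i j hij
      exact Fin.ext (hinj i j i.isLt j.isLt hij)
    calc t = Fintype.card (Fin t) := by simp
    _ ≤ Fintype.card (ZMod p) := Fintype.card_le_of_injective _ hinj2
    _ = p := ZMod.card p
  refine ⟨t, ht1, hdvd_of n h, htle, htz, ?_, ?_⟩
  · intro k h1 hk hz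
    have := hmin k h1 hz; omega
  · intro hp2 hev hteq
    -- g is a bijection Fin p → ZMod p
    have hinj2 : Function.Injective (fun i : Fin p => g i) := by
      intro i j hij
      have hi' : (i : ℕ) < t := by rw [hteq]; exact i.isLt
      have hj' : (j : ℕ) < t := by rw [hteq]; exact j.isLt
      exact Fin.ext (hinj i j hi' hj' hij)
    have hbij : Function.Bijective (fun i : Fin p => g i) :=
      (Fintype.bijective_iff_injective_and_card _).mpr ⟨hinj2, by simp [ZMod.card]⟩
    obtain ⟨i, hi0⟩ := hbij.surjective 1
    obtain ⟨j, hj0⟩ := hbij.surjective (-1)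
    have hi : g (i : ℕ) = 1 := hi0
    have hj : g (j : ℕ) = -1 := hj0
    have hij : (i : ℕ) ≠ (j : ℕ) := by
      intro hE
      have h1 : (1 : ZMod p) = -1 := hi.symm.trans (by rw [hE]; exact hj)
      have h2 : ((2 : ℕ) : ZMod p) = 0 := by push_cast; linear_combination h1
      have hdvd : p ∣ 2 := (ZMod.natCast_eq_zero_iff 2 p).mp h2
      have := (Nat.prime_dvd_prime_iff_eq hp.out Nat.prime_two).mp hdvd
      exact hp2 this
    have hsucc : g ((i : ℕ) + 1) = g ((j : ℕ) + 1) := by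
      rw [hgs, hgs, hi, hj]
      rw [one_pow, hev.neg_one_pow]
    have hfin : False := by
      rcases Nat.lt_or_ge (i : ℕ) (j : ℕ) with hlt | hge
      · have hb : (j : ℕ) + 1 ≤ t := by have := j.isLt; omega
        obtain ⟨h1, h2⟩ := hclash _ _ (by omega) hb (Or.inl (by omega)) hsucc
        have := hmin _ h1 h2
        have := j.isLt; omega
      · have hlt : (j : ℕ) < (i : ℕ) := by omega
        have hb : (i : ℕ) + 1 ≤ t := by have := i.isLt; omega
        obtain ⟨h1, h2⟩ := hclash _ _ (by omega) hb (Or.inl (by omega)) hsucc.symm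
        have := hmin _ h1 h2
        have := i.isLt; omega
    exact hfin

-- part alpha : d = 2, c = -2
lemma W_two_neg_two (n : ℕ) : W 2 (-2) (n + 2) = 2 := by
  induction n with
  | zero => rw [W_succ, W_one 2 (-2) le_rfl]; norm_num
  | succ n ih => rw [W_succ, ih]; norm_num

lemma Dset_two_neg_two : Dset 2 (-2) = {1, 2} := by
  ext n
  simp only [Dset, Set.mem_setOf_eq, Set.mem_insert_iff, Set.mem_singleton_iff]
  constructor
  · rintro ⟨h1, h2⟩
    match n, h1 with
    | 1, _ => exact Or.inl rfl
    | (m + 2), _ =>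
      right
      rw [W_two_neg_two] at h2
      have hle : (m : ℤ) + 2 ≤ 2 := by
        have := Int.le_of_dvd (by norm_num) h2
        push_cast at this ⊢
        linarith
      omega
  · rintro (rfl | rfl)
    · exact ⟨le_rfl, by rw [W_one 2 (-2) le_rfl]; norm_num⟩
    · exact ⟨by norm_num, by rw [show (2:ℕ) = 0 + 2 from rfl, W_two_neg_two]; norm_num⟩

-- mod 4 lemma for c = 1, d even
lemma W_mod_four (d : ℕ) (hd : 2 ≤ d) (he : Even d) (k : ℕ) :
    ((W d 1 (2*k+1) : ℤ) : ZMod 4) = 1 ∧ ((W d 1 (2*k+2) : ℤ) : ZMod 4) = 2 := by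
  have h2d : ((2 : ZMod 4)) ^ d = 0 := by
    obtain ⟨m, hm⟩ := he
    have hm1 : 1 ≤ m := by omega
    rw [show d = 2*m from by omega, pow_mul]
    norm_num
    exact zero_pow (by omega)
  induction k with
  | zero =>
      constructor
      · rw [W_one d 1 hd]; norm_num
      · rw [show 2*0+2 = 1+1 from rfl, W_succ, W_one d 1 hd]; push_cast; rw [one_pow]; norm_num
  | succ k ih =>
      obtain ⟨ih1, ih2⟩ := ih
      have h1 : ((W d 1 (2*(k+1)+1) : ℤ) : ZMod 4) = 1 := by
        rw [show 2*(k+1)+1 = (2*k+2)+1 from by omega, W_succ]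
        push_cast
        rw [ih2, h2d]
        norm_num
      refine ⟨h1, ?_⟩
      rw [show 2*(k+1)+2 = (2*(k+1)+1)+1 from rfl, W_succ]
      push_cast
      rw [h1, one_pow]
      norm_num

-- helper: numbers with no odd prime factor and not divisible by 4
lemma small_of_no_odd (t : ℕ) (h1 : 1 ≤ t) (h4 : ¬ (4 ∣ t))
    (hodd : ∀ q : ℕ, q.Prime → Odd q → ¬ q ∣ t) : t = 1 ∨ t = 2 := by
  by_contra hcon
  push_neg at hcon
  obtain ⟨ht1, ht2⟩ := hcon
  -- every prime factor of t is 2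
  have hall : ∀ q : ℕ, q.Prime → q ∣ t → q = 2 := by
    intro q hq hqt
    rcases hq.eq_two_or_odd' with h | h
    · exact h
    · exact absurd hqt (hodd q hq h)
  have hk : t = 2 ^ t.primeFactorsList.length :=
    Nat.eq_prime_pow_of_unique_prime_dvd (by omega) (fun {q} hq hqt => hall q hq hqt)
  set k := t.primeFactorsList.length with hkd
  have hk0 : k ≠ 0 := fun h => by rw [h, pow_zero] at hk; omega
  have hk1 : k ≠ 1 := fun h => by rw [h, pow_one] at hk; omega
  have hk2 : 2 ≤ k := by omega
  apply h4
  rw [hk]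
  exact ⟨2 ^ (k - 2), by rw [show (4:ℕ) = 2^2 from rfl, ← pow_add]; congr 1; omega⟩

lemma W_two_one (d : ℕ) (hd : 2 ≤ d) : W d 1 2 = 2 := by
  rw [W_succ, W_one d 1 hd, one_pow]; norm_num

lemma Dset_even_one (d : ℕ) (hd : 2 ≤ d) (he : Even d) : Dset d 1 = {1, 2} := by
  ext n
  simp only [Dset, Set.mem_setOf_eq, Set.mem_insert_iff, Set.mem_singleton_iff]
  constructor
  · rintro ⟨hn1, hdvd⟩
    have h4 : ¬ (4 ∣ n) := by
      intro h4
      obtain ⟨j, hj⟩ := h4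
      have hj1 : 1 ≤ j := by omega
      have hmod := (W_mod_four d hd he (2*j - 1)).2
      have heq : 2*(2*j-1)+2 = n := by omega
      rw [heq] at hmod
      have h44 : (4:ℤ) ∣ W d 1 n := by
        refine dvd_trans ?_ hdvd
        exact_mod_cast Int.natCast_dvd_natCast.mpr (hj ▸ Dvd.intro j rfl)
      have hdvd4 : ((W d 1 n : ℤ) : ZMod 4) = 0 :=
        (ZMod.intCast_zmod_eq_zero_iff_dvd _ 4).mpr h44
      rw [hmod] at hdvd4
      exact absurd hdvd4 (by decide)
    have hodd : ∀ q : ℕ, q.Prime → Odd q → ¬ q ∣ n := by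
      intro q
      induction q using Nat.strong_induction_on with
      | _ q IH =>
        intro hq hoddq hqn
        haveI : Fact q.Prime := ⟨hq⟩
        have hz : ((W d 1 n : ℤ) : ZMod q) = 0 := by
          refine (ZMod.intCast_zmod_eq_zero_iff_dvd _ q).mpr (dvd_trans ?_ hdvd)
          exact_mod_cast Int.natCast_dvd_natCast.mpr hqn
        obtain ⟨t, ht1, htn, htq, htz, hmin, hne⟩ := entry_point d 1 q n hn1 hz
        have hq2 : q ≠ 2 := by
          rintro rfl
          rw [Nat.odd_iff] at hoddq
          omega
        have htltq : t < q := lt_of_le_of_ne htq (hne hq2 he)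
        have ht12 : t = 1 ∨ t = 2 := by
          refine small_of_no_odd t ht1 (fun h => h4 (h.trans htn)) ?_
          intro r hr hro hrt
          have hrq : r < q := lt_of_le_of_lt (Nat.le_of_dvd (by omega) hrt) htltq
          exact IH r hrq hr hro (hrt.trans htn)
        rcases ht12 with rfl | rfl
        · rw [W_one d 1 hd] at htz
          exact one_ne_zero (by exact_mod_cast htz)
        · rw [W_two_one d hd] at htz
          have : (q:ℤ) ∣ 2 := (ZMod.intCast_zmod_eq_zero_iff_dvd _ q).mp htz
          have hq2' : q ∣ 2 := by exact_mod_cast this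
          exact hq2 ((Nat.prime_dvd_prime_iff_eq hq Nat.prime_two).mp hq2')
    exact small_of_no_odd n hn1 h4 hodd
  · rintro (rfl | rfl)
    · exact ⟨le_rfl, by rw [W_one d 1 hd]; norm_num⟩
    · exact ⟨by norm_num, by rw [W_two_one d hd]; norm_num⟩

-- Growth lemma, |c| ≥ 2 case
lemma W_growth_big (d : ℕ) (c : ℤ) (hd : 2 ≤ d) (hc : 2 ≤ |c|)
    (hex : ¬(d = 2 ∧ c = -2)) : ∀ k : ℕ, 2 ≤ k → (k : ℤ) + |c| ≤ |W d c k| := by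
  have habs_step : ∀ a : ℤ, |a| ^ d - |c| ≤ |a ^ d + c| := by
    intro a
    have h1 := abs_add_le (a ^ d + c) (-c)
    simp only [add_neg_cancel_right, abs_neg] at h1
    have h2 : |a ^ d| = |a| ^ d := abs_pow a d
    linarith
  have hpow : ∀ a : ℤ, 1 ≤ |a| → |a| ^ 2 ≤ |a| ^ d :=
    fun a ha => pow_le_pow_right₀ ha hd
  intro k hk
  induction k, hk using Nat.le_induction with
  | base =>
      -- |W 2| = |c| * |c^(d-1) + 1| ≥ 2|c|
      have hW2 : W d c 2 = c * (c ^ (d-1) + 1) := by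
        rw [W_succ, W_one d c hd]
        have : c ^ d = c ^ (d - 1) * c := by
          rw [← pow_succ]
          congr 1
          omega
        rw [this]; ring
      have hfac : 2 ≤ |c ^ (d-1) + 1| := by
        rcases le_or_gt 2 c with hc2 | hc2
        · have h1 : (1:ℤ) ≤ c ^ (d-1) := one_le_pow₀ (by linarith)
          rw [abs_of_nonneg (by linarith)]; linarith
        · have hcneg : c ≤ -2 := by
            rcases abs_cases c with ⟨h, _⟩ | ⟨h, _⟩ <;> omega
          rcases Nat.even_or_odd (d-1) with hE | hO
          · have hd1 : 2 ≤ d - 1 := by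
              rcases hE with ⟨m, hm⟩; omega
            have h1 : (2:ℤ)^(d-1) ≤ |c|^(d-1) := pow_le_pow_left₀ (by norm_num) hc (d-1)
            have h2 : (4:ℤ) ≤ 2^(d-1) := by
              calc (4:ℤ) = 2^2 := by norm_num
              _ ≤ 2^(d-1) := pow_le_pow_right₀ (by norm_num) hd1
            have h3 : |c|^(d-1) = c^(d-1) := hE.pow_abs c
            rw [abs_of_nonneg (by linarith)]
            linarith
          · rcases Nat.eq_or_lt_of_le hd with hd2 | hd3
            · -- d = 2, d - 1 = 1
              have : c ≤ -3 := by
                rcases eq_or_lt_of_le hcneg with h | h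
                · exact absurd ⟨hd2.symm, h⟩ hex
                · omega
              rw [show d - 1 = 1 from by omega, pow_one]
              rw [abs_of_nonpos (by linarith)]
              linarith
            · have hd1 : 2 ≤ d - 1 := by omega
              have h1 : (2:ℤ)^(d-1) ≤ |c|^(d-1) := pow_le_pow_left₀ (by norm_num) hc (d-1)
              have h2 : (4:ℤ) ≤ 2^(d-1) := by
                calc (4:ℤ) = 2^2 := by norm_num
                _ ≤ 2^(d-1) := pow_le_pow_right₀ (by norm_num) hd1
              have h3 : c^(d-1) = -(|c|^(d-1)) := by
                rw [abs_of_nonpos (by linarith : c ≤ 0), hO.neg_pow]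
                ring
              rw [abs_of_nonpos (by nlinarith)]
              nlinarith
      rw [hW2, abs_mul]
      push_cast
      nlinarith [abs_nonneg c]
  | succ k hk2 ih =>
      have h1 := habs_step (W d c k)
      have h2 := hpow (W d c k) (by nlinarith [abs_nonneg c, ih])
      rw [W_succ]
      push_cast
      nlinarith [ih]

-- Growth lemma, c = ±1, d odd
lemma W_growth_one (d : ℕ) (c : ℤ) (hd : 2 ≤ d) (hc : c = 1 ∨ c = -1) (ho : Odd d) :
    ∀ k : ℕ, 3 ≤ k → (k : ℤ) + 3 ≤ |W d c k| := by
  have hd3 : 3 ≤ d := by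
    rcases ho with ⟨m, hm⟩; omega
  have hc1 : |c| = 1 := by rcases hc with rfl | rfl <;> norm_num
  have habs_step : ∀ a : ℤ, |a| ^ d - 1 ≤ |a ^ d + c| := by
    intro a
    have h1 := abs_add_le (a ^ d + c) (-c)
    simp only [add_neg_cancel_right, abs_neg] at h1
    have h2 : |a ^ d| = |a| ^ d := abs_pow a d
    rw [hc1] at h1
    linarith
  have hpow : ∀ a : ℤ, 1 ≤ |a| → |a| ^ 2 ≤ |a| ^ d :=
    fun a ha => pow_le_pow_right₀ ha hd
  have hW3 : |W d c 3| = 2^d + 1 := by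
    have h2d : (2:ℤ)^d = |(2:ℤ)|^d := by norm_num
    rcases hc with rfl | rfl
    · have hW2 : W d 1 2 = 2 := W_two_one d hd
      rw [show (3:ℕ) = 2+1 from rfl, W_succ, hW2]
      rw [abs_of_nonneg (by positivity)]
    · have hW2 : W d (-1) 2 = -2 := by
        rw [W_succ, W_one d (-1) hd, ho.neg_one_pow]
        norm_num
      rw [show (3:ℕ) = 2+1 from rfl, W_succ, hW2, ho.neg_pow]
      have hp : (0:ℤ) < 2^d := by positivity
      rw [abs_of_nonpos (by linarith)]
      ring
  intro k hk
  induction k, hk using Nat.le_induction with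
  | base =>
      rw [hW3]
      have h8 : (8:ℤ) ≤ 2^d := by
        calc (8:ℤ) = 2^3 := by norm_num
        _ ≤ 2^d := pow_le_pow_right₀ (by norm_num) hd3
      push_cast
      linarith
  | succ k hk2 ih =>
      have h1 := habs_step (W d c k)
      have h2 := hpow (W d c k) (by nlinarith [ih])
      rw [W_succ]
      push_cast
      nlinarith [ih]

-- parity
lemma W_parity (d : ℕ) (c : ℤ) (hd : 2 ≤ d) (hc : Odd c) :
    ∀ k : ℕ, Even (W d c (2*k)) ∧ Odd (W d c (2*k+1)) := by
  intro k
  induction k with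
  | zero =>
      constructor
      · rw [mul_zero, W_zero]; exact Even.zero
      · rw [mul_zero, zero_add, W_one d c hd]; exact hc
  | succ k ih =>
      obtain ⟨ih1, ih2⟩ := ih
      have h1 : Even (W d c (2*(k+1))) := by
        rw [show 2*(k+1) = (2*k+1)+1 from by omega, W_succ]
        exact (ih2.pow).add_odd hc
      refine ⟨h1, ?_⟩
      rw [show 2*(k+1)+1 = (2*(k+1))+1 from rfl, W_succ]
      refine Even.add_odd ?_ hc
      exact h1.pow_of_ne_zero (by omega)

-- 6 ∈ Dset for c = ±1, d odd
lemma six_mem (d : ℕ) (c : ℤ) (hd : 2 ≤ d) (hc : c = 1 ∨ c = -1) (ho : Odd d) :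
    6 ∈ Dset d c := by
  have hcodd : Odd c := by rcases hc with rfl | rfl <;> decide
  constructor
  · norm_num
  · -- 2 ∣ W 6 and 3 ∣ W 6
    have h2 : (2:ℤ) ∣ W d c 6 := by
      have := (W_parity d c hd hcodd 3).1
      rwa [show 2*3 = 6 from rfl, even_iff_two_dvd] at this
    have h3 : (3:ℤ) ∣ W d c 3 := by
      obtain ⟨m, hm⟩ := id ho
      have hpow3 : (3:ℤ) ∣ 2^d + 1 := by
        have h41 : (4:ℤ) ≡ 1 [ZMOD 3] := by decide
        have h4m : (4:ℤ)^m ≡ 1^m [ZMOD 3] := h41.pow m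
        have h5 : (4:ℤ)^m * 2 + 1 ≡ 1^m * 2 + 1 [ZMOD 3] := (h4m.mul_right 2).add_right 1
        have h6 : (2:ℤ)^d = 4^m * 2 := by
          rw [hm, pow_add, pow_mul]
          norm_num
        rw [h6]
        have h5' : (4:ℤ)^m*2+1 ≡ 3 [ZMOD 3] := by simpa using h5
        have h7 : (4:ℤ)^m*2+1 ≡ 0 [ZMOD 3] := h5'.trans (by decide)
        exact Int.modEq_zero_iff_dvd.mp h7
      rcases hc with rfl | rfl
      · have hW3 : W d 1 3 = 2^d + 1 := by
          rw [show (3:ℕ) = 2+1 from rfl, W_succ, W_two_one d hd]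
        rwa [hW3]
      · have hW2 : W d (-1) 2 = -2 := by
          rw [W_succ, W_one d (-1) hd, ho.neg_one_pow]; norm_num
        have hW3 : W d (-1) 3 = -(2^d + 1) := by
          rw [show (3:ℕ) = 2+1 from rfl, W_succ, hW2, ho.neg_pow]
          ring
        rw [hW3]
        exact dvd_neg.mpr hpow3
    have h36 : (3:ℤ) ∣ W d c 6 := h3.trans (by simpa using W_dvd_W_mul d c 3 2)
    have hcop : IsCoprime (2:ℤ) 3 := by
      rw [Int.isCoprime_iff_gcd_eq_one]
      decide
    have := hcop.mul_dvd h2 h36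
    norm_num at this
    exact_mod_cast this

-- the chain n ↦ |W n| forces infinitude
lemma not_finite_of_growth (d : ℕ) (c : ℤ) (hd : 2 ≤ d) (K : ℕ) (hmem : K ∈ Dset d c)
    (hgrow : ∀ k : ℕ, K ≤ k → (k : ℤ) < |W d c k|) : ¬ (Dset d c).Finite := by
  intro hF
  set F := hF.toFinset with hFd
  have hne : F.Nonempty := ⟨K, hF.mem_toFinset.mpr hmem⟩
  set n := F.max' hne with hnd
  have hnD : n ∈ Dset d c := hF.mem_toFinset.mp (F.max'_mem hne)
  have hKn : K ≤ n := F.le_max' K (hF.mem_toFinset.mpr hmem)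
  obtain ⟨hn1, hndvd⟩ := hnD
  have hW := hgrow n hKn
  obtain ⟨k, hk⟩ : n ∣ (W d c n).natAbs := by
    simpa using Int.natAbs_dvd_natAbs.mpr hndvd
  have haW : |W d c n| = ((n * k : ℕ) : ℤ) := by rw [Int.abs_eq_natAbs, hk]
  have hna : n < n * k := by
    rw [haW] at hW
    exact_mod_cast hW
  have haD : (n * k) ∈ Dset d c := by
    refine ⟨le_trans hn1 (le_of_lt hna), ?_⟩
    have h1 : ((n * k : ℕ) : ℤ) ∣ W d c n := by
      rw [← hk]
      exact Int.natAbs_dvd.mpr dvd_rfl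
    have h2 : W d c n ∣ W d c (k * n) := W_dvd_W_mul d c n k
    rw [Nat.mul_comm n k] at h1 ⊢
    exact h1.trans h2
  have hle : n * k ≤ n := F.le_max' (n * k) (hF.mem_toFinset.mpr haD)
  exact absurd (lt_of_lt_of_le hna hle) (lt_irrefl n)

lemma not_finite_big (d : ℕ) (c : ℤ) (hd : 2 ≤ d) (hc : 2 ≤ |c|)
    (hex : ¬(d = 2 ∧ c = -2)) : ¬ (Dset d c).Finite := by
  refine not_finite_of_growth d c hd 1 ⟨le_rfl, by rw [W_one d c hd]; exact one_dvd c⟩ ?_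
  intro k hk
  rcases Nat.lt_or_ge k 2 with h2 | h2
  · have : k = 1 := by omega
    subst this
    rw [W_one d c hd]
    push_cast
    linarith
  · have := W_growth_big d c hd hc hex k h2
    linarith

lemma not_finite_pm_one (d : ℕ) (c : ℤ) (hd : 2 ≤ d) (hc : c = 1 ∨ c = -1) (ho : Odd d) :
    ¬ (Dset d c).Finite := by
  refine not_finite_of_growth d c hd 6 (six_mem d c hd hc ho) ?_
  intro k hk
  have := W_growth_one d c hd hc ho k (by omega)
  linarith

lemma not_finite_zero (d : ℕ) (hd : 2 ≤ d) : ¬ (Dset d 0).Finite := by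
  have hW : ∀ n : ℕ, W d 0 n = 0 := by
    intro n
    induction n with
    | zero => exact W_zero d 0
    | succ n ih => rw [W_succ, ih, zero_pow (by omega), add_zero]
  intro hF
  refine Set.infinite_of_injective_forall_mem (f := fun k : ℕ => k + 1) ?_ ?_ hF
  · intro i j hij
    simp only [add_left_inj] at hij
    exact hij
  · intro k
    show 1 ≤ k + 1 ∧ ((k+1 : ℕ) : ℤ) ∣ W d 0 (k+1)
    exact ⟨by omega, by rw [hW]; exact dvd_zero _⟩

lemma not_finite_neg_one_even (d : ℕ) (hd : 2 ≤ d) (he : Even d) :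
    ¬ (Dset d (-1)).Finite := by
  have hW : ∀ k : ℕ, W d (-1) (2*k+2) = 0 := by
    intro k
    induction k with
    | zero =>
        rw [show 2*0+2 = 1+1 from rfl, W_succ, W_one d (-1) hd, he.neg_one_pow]
        norm_num
    | succ k ih =>
        have h1 : W d (-1) (2*k+3) = -1 := by
          rw [show 2*k+3 = (2*k+2)+1 from rfl, W_succ, ih, zero_pow (by omega)]
          norm_num
        rw [show 2*(k+1)+2 = (2*k+3)+1 from by omega, W_succ, h1, he.neg_one_pow]
        norm_num
  intro hF
  refine Set.infinite_of_injective_forall_mem (f := fun k : ℕ => 2*k + 2) ?_ ?_ hF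
  · intro i j hij
    simp only [add_left_inj, Nat.mul_left_cancel_iff] at hij
    omega
  · intro k
    show 1 ≤ 2*k + 2 ∧ ((2*k+2 : ℕ) : ℤ) ∣ W d (-1) (2*k+2)
    exact ⟨by omega, by rw [hW]; exact dvd_zero _⟩

theorem D_finite_iff (d : ℕ) (hd : 2 ≤ d) (c : ℤ) :
    ((Dset d c).Finite ↔ ((Even d ∧ c = 1) ∨ (d = 2 ∧ c = -2))) ∧
    (((Even d ∧ c = 1) ∨ (d = 2 ∧ c = -2)) → Dset d c = {1, 2}) := by
  have hpart2 : ((Even d ∧ c = 1) ∨ (d = 2 ∧ c = -2)) → Dset d c = {1, 2} := by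
    rintro (⟨he, rfl⟩ | ⟨rfl, rfl⟩)
    · exact Dset_even_one d hd he
    · exact Dset_two_neg_two
  refine ⟨⟨?_, fun h => by rw [hpart2 h]; exact Set.toFinite _⟩, hpart2⟩
  intro hF
  by_contra hcon
  push_neg at hcon
  obtain ⟨hA, hB⟩ := hcon
  rcases eq_or_ne c 0 with rfl | hc0
  · exact not_finite_zero d hd hF
  rcases eq_or_ne c 1 with rfl | hc1
  · have ho : Odd d := Nat.not_even_iff_odd.mp (fun he => hA he rfl)
    exact not_finite_pm_one d 1 hd (Or.inl rfl) ho hF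
  rcases eq_or_ne c (-1) with rfl | hcm1
  · rcases Nat.even_or_odd d with he | ho
    · exact not_finite_neg_one_even d hd he hF
    · exact not_finite_pm_one d (-1) hd (Or.inr rfl) ho hF
  have hc2 : 2 ≤ |c| := by
    rcases abs_cases c with ⟨h, _⟩ | ⟨h, _⟩ <;> omega
  exact not_finite_big d c hd hc2 (fun ⟨h1, h2⟩ => hB h1 h2) hF
end
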